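/- The function η(ρ, s) = −ρ log(s) is convex as a function of the conservative variables for a perfect gas: more precisely, for a γ-law gas with s = p/ρ^γ, the map (ρ, m, Ẽ) ↦ −ρ log( (γ−1)(Ẽ − m²/(2ρ)) / ρ^γ ) is convex on the domain {ρ > 0, Ẽ − m²/(2ρ) > 0}, where m = ρu and Ẽ = ρE. -/

import Mathlib

/-!
Write `n = Ẽ - m²/(2ρ)` for the internal energy density. Then
`η = ρ log (ρ / ((γ - 1) n)) + (γ - 1) ρ log ρ`, and the second term is convex because `γ ≥ 1`.
Both `m²/ρ` and `ρ log (ρ/n)` are perspectives `t f(x/t)` of convex functions (`x²` and `x log x`),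
hence jointly convex. So `n` is concave, and since `ρ log (ρ/n)` is decreasing in `n`,
substituting the concave `n` preserves its convexity.
-/

open Real Set

section

variable {E : Type*} [AddCommGroup E] [Module ℝ E]

lemma inv_smul_add_smul_eq {x y : E} {t u a b : ℝ} (ht : t ≠ 0) (hu : u ≠ 0)
    (hT : a * t + b * u ≠ 0) :
    (a * t + b * u)⁻¹ • (a • x + b • y) =
      (a * t / (a * t + b * u)) • (t⁻¹ • x) + (b * u / (a * t + b * u)) • (u⁻¹ • y) := by
  simp only [smul_add, smul_smul]
  congr 2 <;> field_simp

theorem ConvexOn.perspective {s : Set E} {f : E → ℝ} (hf : ConvexOn ℝ s f) :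
    ConvexOn ℝ {p : E × ℝ | 0 < p.2 ∧ p.2⁻¹ • p.1 ∈ s} (fun p => p.2 * f (p.2⁻¹ • p.1)) := by
  have weights : ∀ {t u a b : ℝ}, 0 < t → 0 < u → 0 ≤ a → 0 ≤ b → a + b = 1 →
      0 < a * t + b * u ∧ 0 ≤ a * t / (a * t + b * u) ∧ 0 ≤ b * u / (a * t + b * u) ∧
        a * t / (a * t + b * u) + b * u / (a * t + b * u) = 1 := by
    intro t u a b ht hu ha hb hab
    have hT : 0 < a * t + b * u := convex_Ioi (0 : ℝ) ht hu ha hb hab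
    exact ⟨hT, by positivity, by positivity, by rw [← add_div, div_self hT.ne']⟩
  refine ⟨?_, ?_⟩
  · rintro ⟨x, t⟩ ⟨ht, hx⟩ ⟨y, u⟩ ⟨hu, hy⟩ a b ha hb hab
    obtain ⟨hT, hwa, hwb, hw⟩ := weights ht hu ha hb hab
    simp only [Prod.smul_mk, Prod.mk_add_mk, smul_eq_mul, mem_ofPred_eq] at *
    refine ⟨hT, ?_⟩
    rw [inv_smul_add_smul_eq ht.ne' hu.ne' hT.ne']
    exact hf.1 hx hy hwa hwb hw
  · rintro ⟨x, t⟩ ⟨ht, hx⟩ ⟨y, u⟩ ⟨hu, hy⟩ a b ha hb hab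
    obtain ⟨hT, hwa, hwb, hw⟩ := weights ht hu ha hb hab
    simp only [Prod.smul_mk, Prod.mk_add_mk, smul_eq_mul] at *
    rw [inv_smul_add_smul_eq ht.ne' hu.ne' hT.ne']
    calc (a * t + b * u) * f ((a * t / (a * t + b * u)) • (t⁻¹ • x) +
          (b * u / (a * t + b * u)) • (u⁻¹ • y))
        ≤ (a * t + b * u) * ((a * t / (a * t + b * u)) * f (t⁻¹ • x) +
          (b * u / (a * t + b * u)) * f (u⁻¹ • y)) :=
          mul_le_mul_of_nonneg_left (hf.2 hx hy hwa hwb hw) hT.le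
      _ = a * (t * f (t⁻¹ • x)) + b * (u * f (u⁻¹ • y)) := by
          field_simp

theorem convexOn_mul_log_div :
    ConvexOn ℝ (Ici 0 ×ˢ Ioi 0) (fun p : ℝ × ℝ => p.1 * log (p.1 / p.2)) := by
  refine (convexOn_mul_log.perspective.subset ?_ ((convex_Ici 0).prod (convex_Ioi 0))).congr ?_
  · rintro ⟨x, t⟩ ⟨hx : 0 ≤ x, ht : 0 < t⟩
    exact ⟨ht, show 0 ≤ t⁻¹ * x by positivity⟩
  · rintro ⟨x, t⟩ ⟨-, ht : 0 < t⟩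
    simp only [smul_eq_mul, inv_mul_eq_div]
    field_simp

theorem convexOn_sq_div : ConvexOn ℝ {p : ℝ × ℝ | 0 < p.2} (fun p => p.1 ^ 2 / p.2) := by
  refine ((even_two.convexOn_pow (𝕜 := ℝ)).perspective.subset ?_ ?_).congr ?_
  · exact fun p hp => ⟨hp, mem_univ _⟩
  · exact convex_halfSpace_gt (LinearMap.snd ℝ ℝ ℝ).isLinear 0
  · rintro ⟨x, t⟩ (ht : 0 < t)
    simp only [smul_eq_mul, inv_mul_eq_div]
    field_simp

theorem ConcaveOn.convexOn_mul_log_div {s : Set E} {ℓ : E →ₗ[ℝ] ℝ} {h : E → ℝ}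
    (hh : ConcaveOn ℝ s h) (hℓ : ∀ x ∈ s, 0 ≤ ℓ x)
    (hpos : ∀ x ∈ s, 0 < h x) :
    ConvexOn ℝ s (fun x => ℓ x * log (ℓ x / h x)) := by
  refine ⟨hh.1, fun x hx y hy a b ha hb hab => ?_⟩
  have hcomb : a • x + b • y ∈ s := hh.1 hx hy ha hb hab
  have hlower : a * h x + b * h y ≤ h (a • x + b • y) := hh.2 hx hy ha hb hab
  have hmean : 0 < a * h x + b * h y := convex_Ioi (0 : ℝ) (hpos x hx) (hpos y hy) ha hb hab
  have hjoint := _root_.convexOn_mul_log_div.2 (x := (ℓ x, h x)) (y := (ℓ y, h y))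
    ⟨hℓ x hx, hpos x hx⟩ ⟨hℓ y hy, hpos y hy⟩ ha hb hab
  simp only [Prod.smul_mk, Prod.mk_add_mk, smul_eq_mul] at hjoint
  refine le_trans ?_ hjoint
  have hℓcomb : ℓ (a • x + b • y) = a * ℓ x + b * ℓ y := by simp
  show ℓ (a • x + b • y) * log (ℓ (a • x + b • y) / h (a • x + b • y)) ≤ _
  have hℓnonneg := hℓ _ hcomb
  rw [hℓcomb] at hℓnonneg ⊢
  rcases hℓnonneg.eq_or_lt with hzero | hℓpos
  · simp [← hzero]
  · exact mul_le_mul_of_nonneg_left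
      (log_le_log (div_pos hℓpos (hpos _ hcomb))
        (div_le_div_of_nonneg_left hℓpos.le hmean hlower)) hℓpos.le

end

noncomputable def internalEnergy (U : ℝ × ℝ × ℝ) : ℝ := U.2.2 - U.2.1 ^ 2 / (2 * U.1)

theorem concaveOn_internalEnergy : ConcaveOn ℝ {U : ℝ × ℝ × ℝ | 0 < U.1} internalEnergy := by
  let totalEnergy : ℝ × ℝ × ℝ →ₗ[ℝ] ℝ := (LinearMap.snd ℝ ℝ ℝ).comp (LinearMap.snd ℝ ℝ (ℝ × ℝ))
  let momentumDensity : ℝ × ℝ × ℝ →ₗ[ℝ] ℝ × ℝ :=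
    ((LinearMap.fst ℝ ℝ ℝ).comp (LinearMap.snd ℝ ℝ (ℝ × ℝ))).prod (LinearMap.fst ℝ ℝ (ℝ × ℝ))
  have hkin : ConvexOn ℝ {U : ℝ × ℝ × ℝ | 0 < U.1} (fun U => U.2.1 ^ 2 / U.1) :=
    convexOn_sq_div.comp_linearMap momentumDensity
  refine ((totalEnergy.concaveOn hkin.1).sub (hkin.smul (c := (2 : ℝ)⁻¹) (by norm_num))).congr ?_
  intro U _
  simp only [LinearMap.coe_comp, LinearMap.coe_snd, smul_eq_mul, Pi.sub_apply,
    Function.comp_apply, internalEnergy, sub_right_inj, totalEnergy]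
  ring

def admissibleStates : Set (ℝ × ℝ × ℝ) := {U | 0 < U.1 ∧ 0 < internalEnergy U}

lemma neg_mul_log_div_rpow {ρ c γ : ℝ} (hρ : 0 < ρ) (hc : 0 < c) :
    -ρ * log (c / ρ ^ γ) = ρ * log (ρ / c) + (γ - 1) * (ρ * log ρ) := by
  rw [log_div hc.ne' (rpow_pos_of_pos hρ γ).ne', log_rpow hρ, log_div hρ.ne' hc.ne']
  ring

theorem entropy_convex_in_conservative_variables_general
    (γ : ℝ) (hγ1 : 1 < γ) :
    ConvexOn ℝ {U : ℝ × ℝ × ℝ | 0 < U.1 ∧ 0 < U.2.2 - U.2.1 ^ 2 / (2 * U.1)}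
      (fun U : ℝ × ℝ × ℝ =>
        -U.1 * Real.log ((γ - 1) * (U.2.2 - U.2.1 ^ 2 / (2 * U.1)) / U.1 ^ γ)) := by
  have hγ : 0 < γ - 1 := by linarith
  have hΩ : Convex ℝ admissibleStates := concaveOn_internalEnergy.convex_gt 0
  have hρ : ∀ U ∈ admissibleStates, 0 < U.1 := fun U hU => hU.1
  have hrel := ((concaveOn_internalEnergy.subset hρ hΩ).smul hγ.le).convexOn_mul_log_div
    (ℓ := LinearMap.fst ℝ ℝ (ℝ × ℝ)) (fun U hU => (hρ U hU).le)
    (fun U hU => mul_pos hγ hU.2)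
  have hρlogρ := ((convexOn_mul_log.comp_linearMap (LinearMap.fst ℝ ℝ (ℝ × ℝ))).subset
    (fun U hU => mem_Ici.2 (hρ U hU).le) hΩ).smul hγ.le
  exact (hrel.add hρlogρ).congr fun U hU =>
    (neg_mul_log_div_rpow (hρ U hU) (mul_pos hγ hU.2)).symm

/-- The mathematical entropy `η(U) = -ρ log s` is convex in the conservative
variables `(ρ, m, Ẽ)` for a γ-law perfect gas. -/
theorem entropy_convex_in_conservative_variables
    (γ : ℝ) (hγ1 : 1 < γ) (hγ3 : γ ≤ 3) :
    ConvexOn ℝ {U : ℝ × ℝ × ℝ | 0 < U.1 ∧ 0 < U.2.2 - U.2.1 ^ 2 / (2 * U.1)}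
      (fun U : ℝ × ℝ × ℝ =>
        -U.1 * Real.log ((γ - 1) * (U.2.2 - U.2.1 ^ 2 / (2 * U.1)) / U.1 ^ γ)) :=
  entropy_convex_in_conservative_variables_general γ hγ1
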